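/- Let φ : G → G' be a half-isomorphism of groups and a, b, c ∈ G such that φ(ab) = φ(a)φ(b), φ(ac) = φ(c)φ(a), φ(bc) = φ(b)φ(c), and ac ≠ ca. Then cb·ac = ca·cb in G. -/

import Mathlib

/-!
Write `A, B, C` for `φ a, φ b, φ c`. Since `φ` is injective it reflects commutation, so `A` and
`C` do not commute. Computing `φ` of a word of length three or four in `a, b, c` along different
bracketings expresses it as products of `A, B, C` in several orders; after cancelling, most
combinations force two of `A, B, C` to commute, and the surviving ones are relations that clash
on a longer word. This shows first that `b` commutes with `a` or with `c`, and then that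
commuting with `c` forces commuting with `a`. The hypotheses are symmetric under `a ↔ c`, so `b`
commutes with both, and the identity follows.
-/

section

variable {G G' : Type*} [Group G] [Group G']

def IsHalfHom (φ : G → G') : Prop :=
  ∀ x y, φ (x * y) = φ x * φ y ∨ φ (x * y) = φ y * φ x

theorem IsHalfHom.map_mul_mul {φ : G → G'} (hφ : IsHalfHom φ) (x y z : G) :
    (φ (x * y * z) = φ (x * y) * φ z ∨ φ (x * y * z) = φ z * φ (x * y)) ∧
    (φ (x * y * z) = φ x * φ (y * z) ∨ φ (x * y * z) = φ (y * z) * φ x) :=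
  ⟨hφ _ _, (mul_assoc x y z).symm ▸ hφ _ _⟩

structure IsMixedTriple (φ : G → G') (a b c : G) : Prop where
  ab : φ (a * b) = φ a * φ b
  ba : φ (b * a) = φ b * φ a
  ac : φ (a * c) = φ c * φ a
  ca : φ (c * a) = φ a * φ c
  bc : φ (b * c) = φ b * φ c
  cb : φ (c * b) = φ c * φ b

namespace IsMixedTriple

variable {φ : G → G'} {a b c : G}

theorem symm (h : IsMixedTriple φ a b c) : IsMixedTriple φ c b a :=
  ⟨h.cb, h.bc, h.ca, h.ac, h.ba, h.ab⟩

theorem not_commute_map_ab (hinj : Function.Injective φ) (h : IsMixedTriple φ a b c)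
    (hab : ¬Commute a b) : ¬Commute (φ a) (φ b) :=
  fun e => hab <| hinj <| by rw [h.ab, h.ba, e.eq]

theorem not_commute_map_ac (hinj : Function.Injective φ) (h : IsMixedTriple φ a b c)
    (hac : ¬Commute a c) : ¬Commute (φ a) (φ c) :=
  fun e => hac <| hinj <| by rw [h.ac, h.ca, e.eq]

theorem not_commute_map_bc (hinj : Function.Injective φ) (h : IsMixedTriple φ a b c)
    (hbc : ¬Commute b c) : ¬Commute (φ b) (φ c) :=
  fun e => hbc <| hinj <| by rw [h.bc, h.cb, e.eq]

theorem map_bac (hφ : IsHalfHom φ) (h : IsMixedTriple φ a b c)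
    (hAB : ¬Commute (φ a) (φ b)) (hAC : ¬Commute (φ a) (φ c)) :
    (φ (b * a * c) = φ c * φ a * φ b ∧ φ c * φ a * φ b = φ b * φ a * φ c) ∨
    (φ (b * a * c) = φ b * φ c * φ a ∧ Commute (φ b) (φ c)) := by
  obtain ⟨h₁ | h₁, h₂ | h₂⟩ := hφ.map_mul_mul b a c <;>
    rw [h.ba] at h₁ <;> rw [h.ac] at h₂ <;> have e := h₁.symm.trans h₂
  · simp only [mul_assoc, mul_right_inj] at e
    exact absurd e hAC
  · exact .inl ⟨h₂, e.symm⟩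
  · simp only [← mul_assoc, mul_left_inj] at e
    exact .inr ⟨h₂.trans (mul_assoc ..).symm, e.symm⟩
  · simp only [mul_assoc, mul_right_inj] at e
    exact absurd e.symm hAB

theorem commute_ab_or_commute_bc (hinj : Function.Injective φ) (hφ : IsHalfHom φ)
    (h : IsMixedTriple φ a b c) (hac : ¬Commute a c) : Commute a b ∨ Commute b c := by
  by_contra! ⟨hab, hbc⟩
  have hAB := h.not_commute_map_ab hinj hab
  have hAC := h.not_commute_map_ac hinj hac
  have hBC := h.not_commute_map_bc hinj hbc
  obtain ⟨hbac, -⟩ := (h.map_bac hφ hAB hAC).resolve_right fun e => hBC e.2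
  have hacb : φ a * φ c * φ b = φ b * φ c * φ a := by
    obtain ⟨h₁ | h₁, h₂ | h₂⟩ := hφ.map_mul_mul a c b <;>
      rw [h.ac] at h₁ <;> rw [h.cb] at h₂ <;> have e := h₁.symm.trans h₂
    · simp only [← mul_assoc, mul_left_inj] at e
      exact absurd e.symm hAC
    · simp only [mul_assoc, mul_right_inj] at e
      exact absurd e hAB
    · simpa only [mul_assoc] using e.symm
    · simp only [← mul_assoc, mul_left_inj] at e
      exact absurd e hBC
  have e₁ := hφ (c * b) (a * c)
  have e₂ := hφ c (b * a * c)
  rw [h.cb, h.ac] at e₁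
  rw [hbac, show c * (b * a * c) = c * b * (a * c) by group] at e₂
  rcases e₁ with e₁ | e₁ <;> rcases e₂ with e₂ | e₂ <;>
    have e := e₁.symm.trans e₂ <;> simp only [mul_assoc, mul_right_inj] at e
  · refine hAC (mul_right_cancel (b := φ b) ?_)
    rw [hacb]
    simpa only [mul_assoc] using e
  · refine hBC (mul_left_cancel (a := φ a) ?_).symm
    rw [← mul_assoc, hacb]
    simpa only [mul_assoc] using e
  · simp only [← mul_assoc, mul_left_inj] at e
    exact hAC e
  · exact hBC e.symm

theorem map_abc_of_commute_bc (hφ : IsHalfHom φ) (h : IsMixedTriple φ a b c)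
    (hbc : Commute b c) (hAB : ¬Commute (φ a) (φ b)) (hAC : ¬Commute (φ a) (φ c)) :
    φ (a * b * c) = φ a * φ b * φ c ∧ φ a * φ b * φ c = φ b * φ c * φ a := by
  have hBC : Commute (φ b) (φ c) := by
    rw [Commute, SemiconjBy, ← h.bc, ← h.cb, hbc.eq]
  have hne₁ : φ a * φ b * φ c ≠ φ c * φ a * φ b := fun e =>
    hAC <| mul_right_cancel (b := φ b) <| by rw [← e, mul_assoc, ← hBC.eq, ← mul_assoc]
  have hne₂ : φ c * φ a * φ b ≠ φ b * φ c * φ a := fun e =>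
    hAB <| mul_left_cancel (a := φ c) <| by rw [← mul_assoc, e, hBC.eq, mul_assoc]
  obtain ⟨h₁, h₂⟩ := hφ.map_mul_mul a b c
  rw [h.ab] at h₁
  rw [h.bc] at h₂
  rcases h₁ with h₁ | h₁
  · have h₃ := hφ (a * c) b
    rw [h.ac, show a * c * b = a * b * c by rw [mul_assoc, ← hbc.eq, ← mul_assoc]] at h₃
    rcases h₃ with h₃ | h₃
    · exact absurd (h₁.symm.trans h₃) hne₁
    · exact ⟨h₁, h₁.symm.trans (h₃.trans (mul_assoc ..).symm)⟩
  · rcases h₂ with h₂ | h₂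
    · exact absurd (by simpa only [mul_assoc] using h₂.symm.trans h₁) hne₁
    · exact absurd (by simpa only [mul_assoc] using h₁.symm.trans h₂) hne₂

theorem cab_eq_bac_of_commute_bc (hinj : Function.Injective φ) (hφ : IsHalfHom φ)
    (h : IsMixedTriple φ a b c) (hbc : Commute b c) (hac : ¬Commute a c)
    (hAB : ¬Commute (φ a) (φ b)) (hAC : ¬Commute (φ a) (φ c))
    (habc : φ (a * b * c) = φ a * φ b * φ c) (hbac : φ (b * a * c) = φ c * φ a * φ b) :
    c * a * b = b * a * c := by
  obtain ⟨h₁ | h₁, h₂ | h₂⟩ := hφ.map_mul_mul c a b <;>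
    rw [h.ca] at h₁ <;> rw [h.ab] at h₂
  · have e := h₁.symm.trans h₂
    simp only [← mul_assoc, mul_left_inj] at e
    exact absurd e hAC
  · refine absurd (mul_right_cancel (b := b) ?_) hac
    rw [hinj (h₂.trans habc.symm), mul_assoc, mul_assoc, hbc.eq]
  · exact hinj (h₂.trans ((mul_assoc ..).symm.trans hbac.symm))
  · have e := h₁.symm.trans h₂
    simp only [← mul_assoc, mul_left_inj] at e
    exact absurd e.symm hAB

theorem commute_ab_of_commute_bc (hinj : Function.Injective φ) (hφ : IsHalfHom φ)
    (h : IsMixedTriple φ a b c) (hcc : φ (c * c) = φ c * φ c) (hac : ¬Commute a c)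
    (hbc : Commute b c) : Commute a b := by
  by_contra hab
  have hAB := h.not_commute_map_ab hinj hab
  have hAC := h.not_commute_map_ac hinj hac
  obtain ⟨habc, hbca⟩ := h.map_abc_of_commute_bc hφ hbc hAB hAC
  obtain ⟨hbac, hcab⟩ := (h.map_bac hφ hAB hAC).resolve_right fun e =>
    hab <| mul_right_cancel <| hinj <| habc.trans <| hbca.trans e.1.symm
  have hne : φ a * φ b * φ c ≠ φ c * φ a * φ b := fun e =>
    hAC <| mul_left_cancel (a := φ b) <| by rw [← mul_assoc, ← hcab, ← e, hbca, mul_assoc]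
  have e₁ := hφ (c * c) (a * b)
  have e₂ := hφ (c * b) (a * c)
  have e₃ := hφ c (b * a * c)
  rw [hcc, h.ab, show c * c * (a * b) = c * (b * a * c) by
    rw [← h.cab_eq_bac_of_commute_bc hinj hφ hbc hac hAB hAC habc hbac]; group] at e₁
  rw [h.cb, h.ac, show c * b * (a * c) = c * (b * a * c) by group] at e₂
  rw [hbac] at e₃
  rcases e₃ with e₃ | e₃
  · rcases e₂ with e₂ | e₂ <;> have e := e₂.symm.trans e₃ <;>
      simp only [mul_assoc, mul_right_inj] at e
    · refine hAC (mul_left_cancel (a := φ b) ?_).symm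
      rw [e, ← mul_assoc, hcab, mul_assoc]
    · simp only [← mul_assoc, mul_left_inj] at e
      exact hAC e
  · rcases e₁ with e₁ | e₁ <;> have e := e₁.symm.trans e₃
    · simp only [mul_assoc, mul_right_inj] at e
      exact hne (by simpa only [mul_assoc] using e.symm)
    · simp only [← mul_assoc, mul_left_inj] at e
      exact hne e

theorem commute_ab_and_commute_bc (hinj : Function.Injective φ) (hφ : IsHalfHom φ)
    (h : IsMixedTriple φ a b c) (haa : φ (a * a) = φ a * φ a) (hcc : φ (c * c) = φ c * φ c)
    (hac : ¬Commute a c) : Commute a b ∧ Commute b c := by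
  rcases h.commute_ab_or_commute_bc hinj hφ hac with hab | hbc
  · refine ⟨hab, (h.symm.commute_ab_of_commute_bc hinj hφ haa ?_ hab.symm).symm⟩
    exact mt Commute.symm hac
  · exact ⟨h.commute_ab_of_commute_bc hinj hφ hcc hac hbc, hbc⟩

end IsMixedTriple

end

theorem stmt_17_general {G G' : Type*} [Group G] [Group G'] (φ : G → G')
    (hbij : Function.Bijective φ)
    (hhalf : ∀ x y : G, φ (x * y) = φ x * φ y ∨ φ (x * y) = φ y * φ x)
    (a b c : G)
    (hab : ∀ x ∈ Subgroup.closure ({a, b} : Set G), ∀ y ∈ Subgroup.closure ({a, b} : Set G),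
      φ (x * y) = φ x * φ y)
    (hac : ∀ x ∈ Subgroup.closure ({a, c} : Set G), ∀ y ∈ Subgroup.closure ({a, c} : Set G),
      φ (x * y) = φ y * φ x)
    (hbc : ∀ x ∈ Subgroup.closure ({b, c} : Set G), ∀ y ∈ Subgroup.closure ({b, c} : Set G),
      φ (x * y) = φ x * φ y)
    (hne : a * c ≠ c * a) :
    (c * b) * (a * c) = (c * a) * (c * b) := by
  have mem_left {x y : G} : x ∈ Subgroup.closure ({x, y} : Set G) :=
    Subgroup.subset_closure (by simp)
  have mem_right {x y : G} : y ∈ Subgroup.closure ({x, y} : Set G) :=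
    Subgroup.subset_closure (by simp)
  have h : IsMixedTriple φ a b c :=
    ⟨hab _ mem_left _ mem_right, hab _ mem_right _ mem_left, hac _ mem_left _ mem_right,
      hac _ mem_right _ mem_left, hbc _ mem_left _ mem_right, hbc _ mem_right _ mem_left⟩
  obtain ⟨hab', hbc'⟩ := h.commute_ab_and_commute_bc hbij.injective hhalf
    (hac _ mem_left _ mem_left) (hac _ mem_right _ mem_right) hne
  rw [mul_assoc, (hab'.symm.mul_right hbc').eq, mul_assoc, mul_assoc]

theorem stmt_17 {G G' : Type*} [Group G] [Group G'] (φ : G → G')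
    (hbij : Function.Bijective φ)
    (hhalf : ∀ x y : G, φ (x * y) = φ x * φ y ∨ φ (x * y) = φ y * φ x)
    (a b c : G)
    (h1 : φ (a * b) = φ a * φ b)
    (h2 : φ (a * c) = φ c * φ a)
    (h3 : φ (b * c) = φ b * φ c)
    (hab : ∀ x ∈ Subgroup.closure ({a, b} : Set G), ∀ y ∈ Subgroup.closure ({a, b} : Set G),
      φ (x * y) = φ x * φ y)
    (hac : ∀ x ∈ Subgroup.closure ({a, c} : Set G), ∀ y ∈ Subgroup.closure ({a, c} : Set G),
      φ (x * y) = φ y * φ x)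
    (hbc : ∀ x ∈ Subgroup.closure ({b, c} : Set G), ∀ y ∈ Subgroup.closure ({b, c} : Set G),
      φ (x * y) = φ x * φ y)
    (hne : a * c ≠ c * a) :
    (c * b) * (a * c) = (c * a) * (c * b) :=
  stmt_17_general φ hbij hhalf a b c hab hac hbc hne
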